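/- Suppose for every pair i ≠ j the edge probability follows the extreme-popularity solution ã_{ij}(t) = (α_{ij} − (s_i + s_j)/2) e^{−t/τ_g} + (s_i + s_j)/2 with symmetric initial condition α_{ij} = α_{ji}. Then the expected average payoff π̄(t) = ((b−c)/N) Σ_{i ≠ j} ã_{ij}(t) s_j satisfies π̄(t) = (π̄(0) − π̄*) e^{−t/τ_g} + π̄*, where π̄* = (b−c)(N + C − 2)C/(2N) and C = Σ_i s_i. -/
import Mathlib


/-- If every edge probability follows the extreme-popularity
solution with symmetric initial condition `α i j = α j i`, then the expected
average payoff `π̄ t = ((b-c)/N) Σ_{i ≠ j} ta i j t * s j` satisfies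
`π̄ t = (π̄ 0 - π̄*) e^{-t/τg} + π̄*` with
`π̄* = (b-c)(N + C - 2)C/(2N)` and `C = Σ_i s i`. -/
theorem extreme_popularity_average_payoff
    (N : ℕ) (hN : 0 < N) (b c : ℝ)
    (s : Fin N → ℝ) (hs01 : ∀ i, s i = 0 ∨ s i = 1)
    (τg : ℝ) (hτg : 0 < τg)
    (α : Fin N → Fin N → ℝ) (hαsym : ∀ i j, α i j = α j i)
    (ta : Fin N → Fin N → ℝ → ℝ)
    (hta : ∀ i j, i ≠ j → ∀ t,
      ta i j t = (α i j - (s i + s j) / 2) * Real.exp (-t / τg)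
        + (s i + s j) / 2)
    (πbar : ℝ → ℝ)
    (hπbar : ∀ t, πbar t =
      ((b - c) / (N : ℝ)) * ∑ i, ∑ j ∈ Finset.univ.erase i, ta i j t * s j)
    (C : ℝ) (hC : C = ∑ i, s i)
    (πstar : ℝ)
    (hπstar : πstar = (b - c) * ((N : ℝ) + C - 2) * C / (2 * (N : ℝ))) :
    ∀ t, πbar t = (πbar 0 - πstar) * Real.exp (-t / τg) + πstar := by
  have hNne : (N : ℝ) ≠ 0 := Nat.cast_ne_zero.mpr hN.ne'
  have hsq : ∀ i, s i * s i = s i := by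
    intro i; rcases hs01 i with h | h <;> rw [h] <;> ring
  set A : ℝ := ∑ i, ∑ j ∈ Finset.univ.erase i, (α i j - (s i + s j) / 2) * s j with hA
  set B : ℝ := ∑ i, ∑ j ∈ Finset.univ.erase i, (s i + s j) / 2 * s j with hB
  have herase : ∀ i, ∑ j ∈ Finset.univ.erase i, s j = C - s i := by
    intro i
    have := Finset.sum_erase_add Finset.univ s (Finset.mem_univ i)
    rw [hC]; linarith [this]
  have hB' : B = C * ((N : ℝ) + C - 2) / 2 := by
    have hinner : ∀ i, ∑ j ∈ Finset.univ.erase i, (s i + s j) / 2 * s j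
        = (s i * (C - s i) + (C - s i)) / 2 := by
      intro i
      have h1 : ∑ j ∈ Finset.univ.erase i, (s i + s j) / 2 * s j
          = (s i * ∑ j ∈ Finset.univ.erase i, s j
            + ∑ j ∈ Finset.univ.erase i, s j * s j) / 2 := by
        rw [Finset.mul_sum, ← Finset.sum_add_distrib, Finset.sum_div]
        exact Finset.sum_congr rfl fun j _ => by ring
      have h2 : ∑ j ∈ Finset.univ.erase i, s j * s j
          = ∑ j ∈ Finset.univ.erase i, s j :=
        Finset.sum_congr rfl (fun j _ => hsq j)
      rw [h1, h2, herase]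
    rw [hB]
    have : ∑ i, (s i * (C - s i) + (C - s i)) / 2
        = ((∑ i, s i) * C - (∑ i, s i) + (N : ℝ) * C - (∑ i, s i)) / 2 := by
      rw [← Finset.sum_div]
      congr 1
      have : ∀ i : Fin N, s i * (C - s i) + (C - s i)
          = (s i * C - s i) + (C - s i) := by
        intro i; have := hsq i; nlinarith [hsq i]
      rw [Finset.sum_congr rfl (fun i _ => this i), Finset.sum_add_distrib,
        Finset.sum_sub_distrib, Finset.sum_sub_distrib, ← Finset.sum_mul]
      simp [Finset.card_univ]
      ring
    rw [Finset.sum_congr rfl (fun i _ => hinner i), this, ← hC]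
    ring
  have hsplit : ∀ t, ∑ i, ∑ j ∈ Finset.univ.erase i, ta i j t * s j
      = A * Real.exp (-t / τg) + B := by
    intro t
    rw [hA, hB, Finset.sum_mul, ← Finset.sum_add_distrib]
    apply Finset.sum_congr rfl
    intro i _
    rw [Finset.sum_mul, ← Finset.sum_add_distrib]
    apply Finset.sum_congr rfl
    intro j hj
    have hij : i ≠ j := fun h => (Finset.mem_erase.mp hj).1 h.symm
    rw [hta i j hij t]; ring
  intro t
  have h0 : πbar 0 = ((b - c) / (N : ℝ)) * (A + B) := by
    rw [hπbar 0, hsplit 0]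
    simp
  rw [hπbar t, hsplit t, h0, hπstar]
  field_simp
  rw [hB']
  ring
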